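/- Given m₀ > 0 there exists δ = δ(m₀) > 0 such that for all m ≥ m₀ and all tangent vectors {P, v} to ℍ³ with D({P,v}, {e^{-m} j, -j}) < δ, the closure of the shadow at infinity of the cone C(P, v, π/2) is contained in the shadow of the cone C(j, -j, π/2). -/

import Mathlib

open Real

/-- Euclidean inner product on tangent vectors to upper half-space `ℍ³ ≅ ℂ × ℝ`. -/
noncomputable def inn3 (a b : ℂ × ℝ) : ℝ := (a.1 * (starRingEnd ℂ) b.1).re + a.2 * b.2

/-- Euclidean norm of a tangent vector. -/
noncomputable def nrm3 (a : ℂ × ℝ) : ℝ := Real.sqrt (‖a.1‖ ^ 2 + a.2 ^ 2)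

/-- Euclidean angle between tangent vectors (after parallel transport). -/
noncomputable def angle3 (a b : ℂ × ℝ) : ℝ := Real.arccos (inn3 a b / (nrm3 a * nrm3 b))

/-- The quantity `D({P,u},{Q,v}) = max(|ht P/ht Q - 1|, |Z P - Z Q|, angle(u,v))`. -/
noncomputable def DD (P u Q v : ℂ × ℝ) : ℝ :=
  max (max |P.2 / Q.2 - 1| ‖P.1 - Q.1‖) (angle3 u v)

/-- Direction (up to positive scalar) at `p = (z,t) ∈ ℍ³` of the geodesic ray from `p`
to the ideal point `ξ ∈ ℂ`: namely `(2 t (ξ - z), |ξ - z|² - t²)`. -/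
noncomputable def dirToward (p : ℂ × ℝ) (ξ : ℂ) : ℂ × ℝ :=
  ((2 * p.2 : ℝ) • (ξ - p.1), ‖ξ - p.1‖ ^ 2 - p.2 ^ 2)

/-- The shadow at infinity of the cone `C(p, v, θ)`: ideal points `ξ ∈ ℂ` such that the
geodesic ray from `p` to `ξ` makes an angle less than `θ` with direction `v`. -/
noncomputable def shadow (p v : ℂ × ℝ) (θ : ℝ) : Set ℂ :=
  {ξ : ℂ | angle3 (dirToward p ξ) v < θ}

/-! The half-space shadow `shadow p v (π / 2)` consists of the `ξ` whose direction from `p` has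
positive inner product with `v`. If `v` is within angle `δ` of `-j` and `p` lies within `δ` of the
axis, below height `1`, then this inner product is `≤ 0` as soon as `‖ξ - p.1‖ ≥ p.2 + 4δ`. So the
shadow lies in the disc of radius `p.2 + 5δ`, and for `δ` small relative to `1 - e^{-m₀}` its
closure lies in the open unit disc, which is exactly the shadow of `C(j, -j, π/2)`. -/

lemma nrm3_sq (a : ℂ × ℝ) : nrm3 a ^ 2 = ‖a.1‖ ^ 2 + a.2 ^ 2 :=
  sq_sqrt (by positivity)

lemma nrm3_pos {a : ℂ × ℝ} (ha : a ≠ 0) : 0 < nrm3 a := by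
  refine sqrt_pos.mpr (lt_of_le_of_ne (by positivity) fun h ↦ ha ?_)
  have h1 : ‖a.1‖ = 0 := by nlinarith [sq_nonneg ‖a.1‖, sq_nonneg a.2]
  have h2 : a.2 = 0 := by nlinarith [sq_nonneg ‖a.1‖, sq_nonneg a.2]
  exact Prod.ext (norm_eq_zero.mp h1) h2

lemma inn3_pos_of_angle3_lt_pi_div_two {a b : ℂ × ℝ} (h : angle3 a b < π / 2) :
    0 < inn3 a b := by
  rw [angle3, arccos_lt_pi_div_two] at h
  have hnrm : 0 ≤ nrm3 a * nrm3 b := mul_nonneg (sqrt_nonneg _) (sqrt_nonneg _)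
  rcases div_pos_iff.mp h with ⟨hpos, -⟩ | ⟨-, hneg⟩
  · exact hpos
  · exact absurd hnrm hneg.not_ge

lemma angle3_lt_pi_div_two_of_inn3_pos {a b : ℂ × ℝ} (ha : a ≠ 0) (hb : b ≠ 0)
    (h : 0 < inn3 a b) : angle3 a b < π / 2 := by
  have ha' := nrm3_pos ha
  have hb' := nrm3_pos hb
  rw [angle3, arccos_lt_pi_div_two]
  positivity

lemma dirToward_ne_zero {p : ℂ × ℝ} (hp : 0 < p.2) (ξ : ℂ) : dirToward p ξ ≠ 0 := by
  intro h
  have h1 : (2 * p.2 : ℝ) • (ξ - p.1) = 0 := congrArg Prod.fst h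
  have h2 : ‖ξ - p.1‖ ^ 2 - p.2 ^ 2 = 0 := congrArg Prod.snd h
  rw [smul_eq_zero] at h1
  rcases h1 with h1 | h1
  · linarith
  · rw [h1, norm_zero] at h2
    nlinarith

lemma shadow_pi_div_two_eq {p v : ℂ × ℝ} (hp : 0 < p.2) (hv : v ≠ 0) :
    shadow p v (π / 2) = {ξ | 0 < inn3 (dirToward p ξ) v} :=
  Set.ext fun _ ↦ ⟨inn3_pos_of_angle3_lt_pi_div_two,
    angle3_lt_pi_div_two_of_inn3_pos (dirToward_ne_zero hp _) hv⟩

lemma shadow_j_down_eq_ball :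
    shadow ((0 : ℂ), 1) ((0 : ℂ), -1) (π / 2) = Metric.ball 0 1 := by
  rw [shadow_pi_div_two_eq one_pos (by simp)]
  ext ξ
  simp [inn3, dirToward]

lemma angle3_down (v : ℂ × ℝ) : angle3 v ((0 : ℂ), -1) = arccos (-v.2 / nrm3 v) := by
  have h1 : nrm3 ((0 : ℂ), -1) = 1 := by simp [nrm3]
  simp [angle3, inn3, h1, neg_div]

lemma cos_angle3_down {v : ℂ × ℝ} (hv : v ≠ 0) :
    cos (angle3 v ((0 : ℂ), -1)) = -v.2 / nrm3 v := by
  have hN := nrm3_pos hv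
  have hv2 : |v.2| ≤ nrm3 v :=
    abs_le_of_sq_le_sq' (by nlinarith [nrm3_sq v, sq_nonneg ‖v.1‖]) hN.le |> abs_le.mpr
  rw [angle3_down, cos_arccos]
  · rw [le_div_iff₀ hN]; linarith [le_abs_self v.2]
  · rw [div_le_one hN]; linarith [neg_abs_le v.2]

lemma sin_angle3_down {v : ℂ × ℝ} (hv : v ≠ 0) :
    sin (angle3 v ((0 : ℂ), -1)) = ‖v.1‖ / nrm3 v := by
  have hN := nrm3_pos hv
  rw [angle3_down, sin_arccos, div_pow, neg_sq, one_sub_div (pow_pos hN 2).ne', nrm3_sq,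
    add_sub_cancel_right, ← nrm3_sq, ← div_pow, sqrt_sq (by positivity)]

lemma norm_fst_le_of_angle3_down_lt {v : ℂ × ℝ} (hv : v ≠ 0) {ε : ℝ}
    (h : angle3 v ((0 : ℂ), -1) < ε) : ‖v.1‖ ≤ ε * nrm3 v := by
  have hsin : ‖v.1‖ / nrm3 v ≤ ε :=
    sin_angle3_down hv ▸ (sin_le (by rw [angle3_down]; exact arccos_nonneg _)).trans h.le
  rwa [div_le_iff₀ (nrm3_pos hv)] at hsin

lemma nrm3_le_of_angle3_down_le {v : ℂ × ℝ} (hv : v ≠ 0)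
    (h : angle3 v ((0 : ℂ), -1) ≤ π / 3) : nrm3 v ≤ -2 * v.2 := by
  have hcos : cos (π / 3) ≤ cos (angle3 v ((0 : ℂ), -1)) :=
    cos_le_cos_of_nonneg_of_le_pi (by rw [angle3_down]; exact arccos_nonneg _)
      (by linarith [pi_pos]) h
  rw [cos_pi_div_three, cos_angle3_down hv, le_div_iff₀ (nrm3_pos hv)] at hcos
  linarith

lemma inn3_dirToward_le {p : ℂ × ℝ} (hp : 0 ≤ p.2) (ξ : ℂ) (v : ℂ × ℝ) :
    inn3 (dirToward p ξ) v ≤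
      2 * p.2 * ‖ξ - p.1‖ * ‖v.1‖ + (‖ξ - p.1‖ ^ 2 - p.2 ^ 2) * v.2 := by
  have hnorm : ‖(2 * p.2 : ℝ) • (ξ - p.1) * (starRingEnd ℂ) v.1‖ =
      2 * p.2 * ‖ξ - p.1‖ * ‖v.1‖ := by
    rw [norm_mul, norm_smul, Complex.norm_conj, Real.norm_of_nonneg (by positivity)]
  simp only [inn3, dirToward]
  linarith [hnorm ▸ Complex.re_le_norm ((2 * p.2 : ℝ) • (ξ - p.1) * (starRingEnd ℂ) v.1)]

lemma inn3_dirToward_nonpos {p v : ℂ × ℝ} {δ : ℝ} {ξ : ℂ} (hp₀ : 0 ≤ p.2) (hp₁ : p.2 ≤ 1)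
    (hδ : 0 ≤ δ) (hv₁ : ‖v.1‖ ≤ δ * nrm3 v) (hv₂ : nrm3 v ≤ -2 * v.2)
    (hξ : p.2 + 4 * δ ≤ ‖ξ - p.1‖) : inn3 (dirToward p ξ) v ≤ 0 := by
  set s := ‖ξ - p.1‖
  set t := p.2
  -- `(s - t)(s + t) ≥ 4δ(s + t) ≥ 4δst` because `t ≤ 1`
  have hgap : 4 * δ * s * t ≤ s ^ 2 - t ^ 2 := by
    nlinarith [mul_le_mul_of_nonneg_right (sub_le_sub_right hξ t) (by linarith : 0 ≤ s + t),
      mul_le_mul_of_nonneg_left hp₁ (by positivity : 0 ≤ 4 * δ * s)]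
  calc inn3 (dirToward p ξ) v ≤ 2 * t * s * ‖v.1‖ + (s ^ 2 - t ^ 2) * v.2 :=
        inn3_dirToward_le hp₀ ξ v
    _ ≤ 2 * t * s * (δ * nrm3 v) + (s ^ 2 - t ^ 2) * (-nrm3 v / 2) := by
        gcongr
        · nlinarith
        · linarith
    _ = nrm3 v / 2 * (4 * δ * s * t - (s ^ 2 - t ^ 2)) := by ring
    _ ≤ 0 :=
        mul_nonpos_of_nonneg_of_nonpos (div_nonneg (sqrt_nonneg _) zero_le_two) (by linarith)

lemma shadow_subset_ball {p v : ℂ × ℝ} {δ : ℝ} (hp₀ : 0 ≤ p.2) (hp₁ : p.2 ≤ 1) (hδ : 0 ≤ δ)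
    (hv₁ : ‖v.1‖ ≤ δ * nrm3 v) (hv₂ : nrm3 v ≤ -2 * v.2) (hz : ‖p.1‖ ≤ δ) :
    shadow p v (π / 2) ⊆ Metric.ball 0 (p.2 + 5 * δ) := by
  intro ξ hξ
  rw [mem_ball_zero_iff]
  by_contra! hfar
  have hξp : p.2 + 4 * δ ≤ ‖ξ - p.1‖ := by linarith [norm_sub_norm_le ξ p.1]
  exact (inn3_dirToward_nonpos hp₀ hp₁ hδ hv₁ hv₂ hξp).not_gt
    (inn3_pos_of_angle3_lt_pi_div_two hξ)

lemma lt_mul_of_abs_div_sub_one_lt {a b δ : ℝ} (hb : 0 < b) (h : |a / b - 1| < δ) :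
    a < (1 + δ) * b := by
  rw [← div_lt_iff₀ hb]
  linarith [(abs_lt.mp h).2]

/-- Nesting of shadows: given `m₀ > 0`, there is `δ > 0` such that for all `m ≥ m₀` and all
tangent vectors `{P, v}` with `D({P,v},{e^{-m} j, -j}) < δ`, the closure of the shadow of
`C(P, v, π/2)` is contained in the shadow of `C(j, -j, π/2)`. -/
theorem stmt12 : ∀ m₀ > (0:ℝ), ∃ δ > (0:ℝ), ∀ m ≥ m₀, ∀ P v : ℂ × ℝ, 0 < P.2 → v ≠ 0 →
    DD P v ((0 : ℂ), Real.exp (-m)) ((0 : ℂ), -1) < δ →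
    closure (shadow P v (π / 2)) ⊆ shadow ((0 : ℂ), 1) ((0 : ℂ), -1) (π / 2) := by
  intro m₀ hm₀
  set c := exp (-m₀)
  have hc : c < 1 := exp_lt_one_iff.mpr (by linarith)
  set δ := (1 - c) / 8 with hδ
  refine ⟨δ, by linarith, fun m hm P v hP hv hD ↦ ?_⟩
  simp only [DD, max_lt_iff, sub_zero] at hD
  obtain ⟨⟨hheight, hcenter⟩, hangle⟩ := hD
  have hPc : P.2 ≤ c + δ :=
    calc P.2 ≤ (1 + δ) * exp (-m) := (lt_mul_of_abs_div_sub_one_lt (exp_pos _) hheight).le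
      _ ≤ (1 + δ) * c := by gcongr; exact exp_le_exp.mpr (by linarith)
      _ ≤ c + δ := by nlinarith [exp_pos (-m₀)]
  have hball := shadow_subset_ball hP.le (by linarith) (by linarith)
    (norm_fst_le_of_angle3_down_lt hv hangle)
    (nrm3_le_of_angle3_down_le hv (by linarith [pi_gt_three])) hcenter.le
  rw [shadow_j_down_eq_ball]
  calc closure (shadow P v (π / 2))
    _ ⊆ closure (Metric.ball 0 (P.2 + 5 * δ)) := closure_mono hball
    _ ⊆ Metric.closedBall 0 (P.2 + 5 * δ) := Metric.closure_ball_subset_closedBall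
    _ ⊆ Metric.ball 0 1 := Metric.closedBall_subset_ball (by linarith)
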